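/- arXiv:1504.07793 — 3 statements merged into one kernel-verified Lean document; each statement's English description precedes it below -/
import Mathlib

section
/- Let Φ : H → ℝ ∪ {+∞} be a proper, convex, lower semicontinuous function on a real Hilbert space H, let λ > 0 and set μ = 1/λ. Let ε : [0,+∞) → [0,+∞) be nonnegative and locally integrable and let (x₀, v₀) ∈ H × H satisfy v₀ ∈ ∂Φ(x₀). Then the unique strong global solution (x(·), v(·)) of the Cauchy problem v(t) ∈ ∂Φ(x(t)), λẋ(t) + v̇(t) + v(t) + ε(t)x(t) = 0, x(0) = x₀, v(0) = v₀ is represented for all t ≥ 0 by x(t) = prox_{μΦ}(y(t)) and v(t) = ∇Φ_μ(y(t)), where y(·) : [0,+∞) → H is the unique strong global solution of the Cauchy problem ẏ(t) + μ∇Φ_μ(y(t)) + μ ε(t) prox_{μΦ}(y(t)) = 0, y(0) = x₀ + μ v₀. -/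
noncomputable section
open MeasureTheory Filter Set
open scoped InnerProductSpace RealInnerProductSpace Topology ENNReal NNReal

set_option linter.unusedSectionVars false
set_option maxHeartbeats 1000000

variable {H : Type*} [NormedAddCommGroup H] [InnerProductSpace ℝ H] [CompleteSpace H]

/-- The subdifferential of an extended-real-valued convex function:
`∂Φ(x) = {p : Φ(y) ≥ Φ(x) + ⟨p, y - x⟩ for all y}`. -/
def subdiff (Φ : H → EReal) (x : H) : Set H :=
  {p : H | ∀ y : H, Φ x + ((⟪p, y - x⟫ : ℝ) : EReal) ≤ Φ y}

/-- A proper function: never takes the value `⊥` and is not identically `⊤`. -/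
def ProperFn (Φ : H → EReal) : Prop := (∀ x, Φ x ≠ ⊥) ∧ ∃ x, Φ x ≠ ⊤

/-- Convexity for extended-real-valued functions. -/
def EConvexOn (Φ : H → EReal) : Prop :=
  ∀ x y : H, ∀ a b : ℝ, 0 ≤ a → 0 ≤ b → a + b = 1 →
    Φ (a • x + b • y) ≤ (a : EReal) * Φ x + (b : EReal) * Φ y

/-- The Fenchel conjugate `f*(u) = sup_x (⟨x, u⟩ - f(x))`. -/
def fenchel (Φ : H → EReal) (u : H) : EReal := ⨆ x : H, ((⟪x, u⟫ : ℝ) : EReal) - Φ x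

/-- The Moreau envelope of parameter `γ`: `f_γ(x) = inf_ξ (f(ξ) + (1/(2γ))‖x - ξ‖²)`. -/
def moreau (γ : ℝ) (Φ : H → EReal) (x : H) : EReal :=
  ⨅ ξ : H, Φ ξ + (((1 / (2 * γ)) * ‖x - ξ‖ ^ 2 : ℝ) : EReal)

/-- The support function `σ_C(z) = sup_{c ∈ C} ⟨z, c⟩`. -/
def suppFn (C : Set H) (z : H) : EReal := ⨆ c ∈ C, ((⟪z, c⟫ : ℝ) : EReal)

/-- Map an extended real number to `ℝ≥0∞` (sending `⊤` to `⊤` and negatives to `0`). -/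
def eToENN (x : EReal) : ℝ≥0∞ := if x = ⊤ then ⊤ else ENNReal.ofReal x.toReal

/-- `(x, v)` is a strong global solution of the regularized Newton dynamic
`v(t) ∈ ∂Φ(x(t))`, `λ ẋ(t) + v̇(t) + v(t) + ε(t) x(t) = 0`:
`x, v` are absolutely continuous on compact subintervals of `[0, ∞)` (encoded by the
existence of locally integrable derivatives together with the fundamental theorem of
calculus representation), the inclusion holds everywhere on `[0, ∞)`, and the
differential equation holds almost everywhere on `[0, ∞)`. -/
def IsStrongSol (Φ : H → EReal) (lam : ℝ) (ε : ℝ → ℝ) (x v : ℝ → H) : Prop :=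
  ∃ x' v' : ℝ → H,
    (∀ b : ℝ, 0 < b → IntervalIntegrable x' volume 0 b ∧ IntervalIntegrable v' volume 0 b) ∧
    (∀ t : ℝ, 0 ≤ t → x t = x 0 + ∫ s in (0:ℝ)..t, x' s) ∧
    (∀ t : ℝ, 0 ≤ t → v t = v 0 + ∫ s in (0:ℝ)..t, v' s) ∧
    (∀ t : ℝ, 0 ≤ t → v t ∈ subdiff Φ (x t)) ∧
    (∀ᵐ t ∂(volume.restrict (Set.Ici (0:ℝ))),
      lam • x' t + v' t + v t + ε t • x t = 0)

/-- `y` is a strong global solution of `ẏ(t) + μ ∇Φ_μ(y(t)) + μ ε(t) prox_{μΦ}(y(t)) = 0`,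
where `p = prox_{μΦ}` and the Yosida approximation is `∇Φ_μ = μ⁻¹(I - p)`. -/
def IsYSol (p : H → H) (μ : ℝ) (ε : ℝ → ℝ) (y : ℝ → H) : Prop :=
  ∃ y' : ℝ → H,
    (∀ b : ℝ, 0 < b → IntervalIntegrable y' volume 0 b) ∧
    (∀ t : ℝ, 0 ≤ t → y t = y 0 + ∫ s in (0:ℝ)..t, y' s) ∧
    (∀ᵐ t ∂(volume.restrict (Set.Ici (0:ℝ))),
      y' t + μ • (μ⁻¹ • (y t - p (y t))) + (μ * ε t) • p (y t) = 0)

section PartA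

variable {Φ : H → EReal} {μ : ℝ} {p : H → H}

lemma subdiff_ne_top (hproper : ProperFn Φ) {v x : H} (hv : v ∈ subdiff Φ x) :
    Φ x ≠ ⊤ := by
  obtain ⟨hbot, x₁, hx₁⟩ := hproper
  intro htop
  have h := hv x₁
  rw [htop, EReal.top_add_coe] at h
  exact hx₁ (top_le_iff.1 h)

lemma prox_ne_top (hproper : ProperFn Φ)
    (hprox : ∀ y ξ : H,
      Φ (p y) + (((1 / (2 * μ)) * ‖y - p y‖ ^ 2 : ℝ) : EReal) ≤
        Φ ξ + (((1 / (2 * μ)) * ‖y - ξ‖ ^ 2 : ℝ) : EReal)) (y : H) :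
    Φ (p y) ≠ ⊤ := by
  obtain ⟨hbot, x₁, hx₁⟩ := hproper
  intro htop
  have h := hprox y x₁
  rw [htop, EReal.top_add_coe] at h
  have h1 := hbot x₁
  lift Φ x₁ to ℝ using ⟨hx₁, h1⟩ with a
  rw [← EReal.coe_add] at h
  exact EReal.coe_ne_top _ (top_le_iff.1 h)

/-- The mono inequality for the subdifferential. -/
lemma subdiff_mono (hproper : ProperFn Φ) {v x u z : H}
    (hv : v ∈ subdiff Φ x) (hu : u ∈ subdiff Φ z) :
    0 ≤ ⟪v - u, x - z⟫ := by
  have hxt := subdiff_ne_top hproper hv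
  have hzt := subdiff_ne_top hproper hu
  have h1 := hv z
  have h2 := hu x
  lift Φ x to ℝ using ⟨hxt, hproper.1 x⟩ with a
  lift Φ z to ℝ using ⟨hzt, hproper.1 z⟩ with b
  rw [← EReal.coe_add, EReal.coe_le_coe_iff] at h1 h2
  have hinner : ⟪v - u, x - z⟫ = -⟪v, z - x⟫ - ⟪u, x - z⟫ := by
    rw [inner_sub_left]
    have : (z - x) = -(x - z) := by abel
    rw [this, inner_neg_right]
    ring
  rw [hinner]; linarith

/-- The key variational inequality: `μ⁻¹ (y - p y) ∈ ∂Φ(p y)`. -/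
lemma yosida_mem_subdiff (hproper : ProperFn Φ) (hconv : EConvexOn Φ) (hμ0 : 0 < μ)
    (hprox : ∀ y ξ : H,
      Φ (p y) + (((1 / (2 * μ)) * ‖y - p y‖ ^ 2 : ℝ) : EReal) ≤
        Φ ξ + (((1 / (2 * μ)) * ‖y - ξ‖ ^ 2 : ℝ) : EReal)) (y : H) :
    μ⁻¹ • (y - p y) ∈ subdiff Φ (p y) := by
  intro ξ
  by_cases hξt : Φ ξ = ⊤
  · rw [hξt]; exact le_top
  have hpt := prox_ne_top hproper hprox y
  have hc0 : 0 < 1 / (2 * μ) := by positivity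
  obtain ⟨a, ha⟩ : ∃ a : ℝ, Φ (p y) = (a : EReal) :=
    ⟨_, (EReal.coe_toReal hpt (hproper.1 _)).symm⟩
  obtain ⟨e, he⟩ : ∃ e : ℝ, Φ ξ = (e : EReal) :=
    ⟨_, (EReal.coe_toReal hξt (hproper.1 _)).symm⟩
  rw [ha, he, ← EReal.coe_add, EReal.coe_le_coe_iff]
  have hinner : ⟪μ⁻¹ • (y - p y), ξ - p y⟫ = μ⁻¹ * ⟪y - p y, ξ - p y⟫ :=
    real_inner_smul_left _ _ _
  have key : ∀ t : ℝ, 0 < t → t ≤ 1 →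
      2 * (1 / (2 * μ)) * ⟪y - p y, ξ - p y⟫ ≤
        (e - a) + t * ((1 / (2 * μ)) * ‖ξ - p y‖ ^ 2) := by
    intro t ht0 ht1
    have hcv := hconv (p y) ξ (1 - t) t (by linarith) ht0.le (by ring)
    have hpe : (1 - t) • p y + t • ξ = p y + t • (ξ - p y) := by module
    rw [hpe, ha, he] at hcv
    have hpr := hprox y (p y + t • (ξ - p y))
    have hnorm : y - (p y + t • (ξ - p y)) = (y - p y) - t • (ξ - p y) := by module
    rw [hnorm, ha] at hpr
    have hcomb : (a : EReal) + ((1 / (2 * μ) * ‖y - p y‖ ^ 2 : ℝ) : EReal) ≤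
        ((1 - t : ℝ) : EReal) * (a : EReal) + (t : EReal) * (e : EReal) +
          ((1 / (2 * μ) * ‖y - p y - t • (ξ - p y)‖ ^ 2 : ℝ) : EReal) :=
      le_trans hpr (add_le_add_left hcv _)
    have hreal : a + 1 / (2 * μ) * ‖y - p y‖ ^ 2 ≤
        (1 - t) * a + t * e + 1 / (2 * μ) * ‖y - p y - t • (ξ - p y)‖ ^ 2 := by
      exact_mod_cast hcomb
    have hexp : ‖y - p y - t • (ξ - p y)‖ ^ 2 =
        ‖y - p y‖ ^ 2 - 2 * (t * ⟪y - p y, ξ - p y⟫) + t ^ 2 * ‖ξ - p y‖ ^ 2 := by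
      rw [norm_sub_sq_real, real_inner_smul_right, norm_smul]
      simp [mul_pow, abs_mul_abs_self]
      try ring
    rw [hexp] at hreal
    have hdiv : 2 * (1 / (2 * μ)) * ⟪y - p y, ξ - p y⟫ -
        t * (1 / (2 * μ) * ‖ξ - p y‖ ^ 2) ≤ e - a := by
      have h3 : t * (2 * (1 / (2 * μ)) * ⟪y - p y, ξ - p y⟫ -
          t * (1 / (2 * μ) * ‖ξ - p y‖ ^ 2)) ≤ t * (e - a) := by nlinarith
      exact le_of_mul_le_mul_left (by linarith [h3]) ht0
    linarith
  have hfin : 2 * (1 / (2 * μ)) * ⟪y - p y, ξ - p y⟫ ≤ e - a := by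
    apply le_of_forall_pos_le_add
    intro δ hδ
    have hC : 0 ≤ 1 / (2 * μ) * ‖ξ - p y‖ ^ 2 := by positivity
    have ht0 : 0 < min 1 (δ / (1 / (2 * μ) * ‖ξ - p y‖ ^ 2 + 1)) :=
      lt_min one_pos (by positivity)
    have := key _ ht0 (min_le_left _ _)
    have htc : min 1 (δ / (1 / (2 * μ) * ‖ξ - p y‖ ^ 2 + 1)) *
        (1 / (2 * μ) * ‖ξ - p y‖ ^ 2) ≤ δ := by
      have h4 := min_le_right 1 (δ / (1 / (2 * μ) * ‖ξ - p y‖ ^ 2 + 1))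
      have h5 : min 1 (δ / (1 / (2 * μ) * ‖ξ - p y‖ ^ 2 + 1)) *
          (1 / (2 * μ) * ‖ξ - p y‖ ^ 2) ≤
          (δ / (1 / (2 * μ) * ‖ξ - p y‖ ^ 2 + 1)) * (1 / (2 * μ) * ‖ξ - p y‖ ^ 2) :=
        mul_le_mul_of_nonneg_right h4 hC
      have h6 : (δ / (1 / (2 * μ) * ‖ξ - p y‖ ^ 2 + 1)) *
          (1 / (2 * μ) * ‖ξ - p y‖ ^ 2) ≤ δ := by
        rw [div_mul_eq_mul_div, div_le_iff₀ (by positivity)]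
        nlinarith
      linarith
    linarith
  have h2c : μ⁻¹ = 2 * (1 / (2 * μ)) := by field_simp
  rw [hinner, h2c]; linarith

lemma prox_of_subdiff (hproper : ProperFn Φ) (hconv : EConvexOn Φ) (hμ0 : 0 < μ)
    (hprox : ∀ y ξ : H,
      Φ (p y) + (((1 / (2 * μ)) * ‖y - p y‖ ^ 2 : ℝ) : EReal) ≤
        Φ ξ + (((1 / (2 * μ)) * ‖y - ξ‖ ^ 2 : ℝ) : EReal))
    {v x : H} (hv : v ∈ subdiff Φ x) : p (x + μ • v) = x := by
  set w : H := x + μ • v with hwdef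
  have hu := yosida_mem_subdiff hproper hconv hμ0 hprox w
  have hmono := subdiff_mono hproper hv hu
  have hμne : μ ≠ 0 := hμ0.ne'
  have hvu : v - μ⁻¹ • (w - p w) = -(μ⁻¹ • (x - p w)) := by
    rw [hwdef]
    rw [show x + μ • v - p w = (x - p w) + μ • v by abel, smul_add, smul_smul,
      inv_mul_cancel₀ hμne, one_smul]
    module
  rw [hvu, inner_neg_left, real_inner_smul_left, real_inner_self_eq_norm_sq] at hmono
  have : ‖x - p w‖ ^ 2 ≤ 0 := by
    have hinv : 0 < μ⁻¹ := by positivity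
    nlinarith
  have : x - p w = 0 := by
    have := norm_eq_zero.1 (by nlinarith [norm_nonneg (x - p w), sq_nonneg ‖x - p w‖] : ‖x - p w‖ = 0)
    exact this
  rw [← sub_eq_zero]
  rw [← neg_sub]; simp [this]

lemma prox_nonexpansive (hproper : ProperFn Φ) (hconv : EConvexOn Φ) (hμ0 : 0 < μ)
    (hprox : ∀ y ξ : H,
      Φ (p y) + (((1 / (2 * μ)) * ‖y - p y‖ ^ 2 : ℝ) : EReal) ≤
        Φ ξ + (((1 / (2 * μ)) * ‖y - ξ‖ ^ 2 : ℝ) : EReal))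
    (a b : H) : ‖p a - p b‖ ≤ ‖a - b‖ := by
  have h1 := yosida_mem_subdiff hproper hconv hμ0 hprox a
  have h2 := yosida_mem_subdiff hproper hconv hμ0 hprox b
  have hmono := subdiff_mono hproper h1 h2
  have hμne : μ ≠ 0 := hμ0.ne'
  have hdiff : μ⁻¹ • (a - p a) - μ⁻¹ • (b - p b) = μ⁻¹ • ((a - b) - (p a - p b)) := by
    module
  rw [hdiff, real_inner_smul_left, inner_sub_left, real_inner_self_eq_norm_sq] at hmono
  have hinv : 0 < μ⁻¹ := by positivity
  have hkey : ‖p a - p b‖ ^ 2 ≤ ⟪a - b, p a - p b⟫ := by nlinarith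
  have hcs : ⟪a - b, p a - p b⟫ ≤ ‖a - b‖ * ‖p a - p b‖ := real_inner_le_norm _ _
  nlinarith [norm_nonneg (p a - p b), norm_nonneg (a - b)]

end PartA


/-- The vector field of the `y`-ODE. -/
def Gfield (p : H → H) (μ : ℝ) (ε : ℝ → ℝ) (s : ℝ) (z : H) : H :=
  -z + (1 - μ * ε s) • p z

/-- Solution of the `y`-ODE on `[t₀, t₁]` with value `a` at `t₀`. -/
def LocSol (p : H → H) (μ : ℝ) (ε : ℝ → ℝ) (a : H) (t₀ t₁ : ℝ) (z : ℝ → H) : Prop :=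
  IntervalIntegrable (fun s => Gfield p μ ε s (z s)) volume t₀ t₁ ∧
    ∀ t ∈ Icc t₀ t₁, z t = a + ∫ s in t₀..t, Gfield p μ ε s (z s)

section PartB

variable {p : H → H} {μ : ℝ} {ε : ℝ → ℝ}

lemma G_lip (hp : ∀ a b : H, ‖p a - p b‖ ≤ ‖a - b‖) (hμ0 : 0 < μ) (hεnn : ∀ t, 0 ≤ ε t)
    (s : ℝ) (z₁ z₂ : H) :
    ‖Gfield p μ ε s z₁ - Gfield p μ ε s z₂‖ ≤ (2 + μ * ε s) * ‖z₁ - z₂‖ := by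
  have h1 : Gfield p μ ε s z₁ - Gfield p μ ε s z₂ =
      -(z₁ - z₂) + (1 - μ * ε s) • (p z₁ - p z₂) := by
    simp only [Gfield]; module
  rw [h1]
  have h2 : ‖-(z₁ - z₂) + (1 - μ * ε s) • (p z₁ - p z₂)‖ ≤
      ‖z₁ - z₂‖ + |1 - μ * ε s| * ‖p z₁ - p z₂‖ := by
    calc _ ≤ ‖-(z₁ - z₂)‖ + ‖(1 - μ * ε s) • (p z₁ - p z₂)‖ := norm_add_le _ _
    _ = ‖z₁ - z₂‖ + |1 - μ * ε s| * ‖p z₁ - p z₂‖ := by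
        rw [norm_neg, norm_smul, Real.norm_eq_abs]
  have h3 : |1 - μ * ε s| ≤ 1 + μ * ε s := by
    have : 0 ≤ μ * ε s := mul_nonneg hμ0.le (hεnn s)
    rw [abs_le]; constructor <;> linarith
  have h4 := hp z₁ z₂
  have h5 : |1 - μ * ε s| * ‖p z₁ - p z₂‖ ≤ (1 + μ * ε s) * ‖z₁ - z₂‖ := by
    have := abs_nonneg (1 - μ * ε s)
    nlinarith [norm_nonneg (p z₁ - p z₂), norm_nonneg (z₁ - z₂)]
  nlinarith [norm_nonneg (z₁ - z₂)]

lemma G_bound (hp : ∀ a b : H, ‖p a - p b‖ ≤ ‖a - b‖) (hμ0 : 0 < μ) (hεnn : ∀ t, 0 ≤ ε t)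
    (s : ℝ) (z : H) :
    ‖Gfield p μ ε s z‖ ≤ (2 + μ * ε s) * (‖z‖ + ‖p 0‖) := by
  have h2 : ‖Gfield p μ ε s z‖ ≤ ‖z‖ + |1 - μ * ε s| * ‖p z‖ := by
    calc _ ≤ ‖-z‖ + ‖(1 - μ * ε s) • p z‖ := norm_add_le _ _
    _ = ‖z‖ + |1 - μ * ε s| * ‖p z‖ := by rw [norm_neg, norm_smul, Real.norm_eq_abs]
  have h3 : |1 - μ * ε s| ≤ 1 + μ * ε s := by
    have : 0 ≤ μ * ε s := mul_nonneg hμ0.le (hεnn s)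
    rw [abs_le]; constructor <;> linarith
  have h4 : ‖p z‖ ≤ ‖z‖ + ‖p 0‖ := by
    calc ‖p z‖ ≤ ‖p z - p 0‖ + ‖p 0‖ := by
          simpa using norm_add_le (p z - p 0) (p 0)
    _ ≤ ‖z - 0‖ + ‖p 0‖ := by linarith [hp z 0]
    _ = ‖z‖ + ‖p 0‖ := by rw [sub_zero]
  have := abs_nonneg (1 - μ * ε s)
  nlinarith [norm_nonneg z, norm_nonneg (p z), norm_nonneg (p 0)]

lemma L_intInt (hμ0 : 0 < μ) {c d : ℝ} (hεi : IntervalIntegrable ε volume c d) :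
    IntervalIntegrable (fun s => 2 + μ * ε s) volume c d :=
  intervalIntegrable_const.add (hεi.const_mul μ)

lemma II_congr {F : Type*} [NormedAddCommGroup F] {f g : ℝ → F} {c d : ℝ}
    (h : IntervalIntegrable f volume c d) (he : ∀ t ∈ Set.uIoc c d, f t = g t) :
    IntervalIntegrable g volume c d := by
  rw [intervalIntegrable_iff] at h ⊢
  exact h.congr_fun (fun t ht => he t ht) measurableSet_uIoc

lemma G_comp_integrable (hp : ∀ a b : H, ‖p a - p b‖ ≤ ‖a - b‖) (hμ0 : 0 < μ)
    (hεnn : ∀ t, 0 ≤ ε t) {c d : ℝ} (hεi : IntervalIntegrable ε volume c d)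
    (g : ℝ → H) (hg : Continuous g) (M : ℝ) (hM : ∀ s, ‖g s‖ ≤ M) :
    IntervalIntegrable (fun s => Gfield p μ ε s (g s)) volume c d := by
  have hpc : Continuous p := by
    have : LipschitzWith 1 p :=
      LipschitzWith.of_dist_le_mul (fun a b => by
        rw [dist_eq_norm, dist_eq_norm]; simpa using hp a b)
    exact this.continuous
  have hLi : IntervalIntegrable (fun s => (2 + μ * ε s) * (M + ‖p 0‖)) volume c d :=
    (L_intInt hμ0 hεi).mul_const _
  apply hLi.mono_fun
  · apply AEStronglyMeasurable.add
    · exact (hg.neg.aestronglyMeasurable).restrict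
    · apply AEStronglyMeasurable.smul
      · apply AEStronglyMeasurable.sub aestronglyMeasurable_const
        exact (hεi.def'.aestronglyMeasurable.const_mul μ)
      · exact ((hpc.comp hg).aestronglyMeasurable).restrict
  · apply Eventually.of_forall
    intro s
    have h1 := G_bound hp hμ0 hεnn (ε := ε) s (g s)
    have h2 : ‖g s‖ + ‖p 0‖ ≤ M + ‖p 0‖ := by linarith [hM s]
    have h3 : (0:ℝ) ≤ 2 + μ * ε s := by
      have := mul_nonneg hμ0.le (hεnn s); linarith
    have h4 : (2 + μ * ε s) * (‖g s‖ + ‖p 0‖) ≤ (2 + μ * ε s) * (M + ‖p 0‖) :=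
      mul_le_mul_of_nonneg_left h2 h3
    have h5 : (0:ℝ) ≤ (2 + μ * ε s) * (M + ‖p 0‖) := by
      have : 0 ≤ M + ‖p 0‖ := le_trans (by positivity) h2
      positivity
    simp only [Gfield, Real.norm_eq_abs]
    rw [abs_of_nonneg h5]
    calc ‖-g s + (1 - μ * ε s) • p (g s)‖ ≤ (2 + μ * ε s) * (‖g s‖ + ‖p 0‖) := h1
    _ ≤ _ := h4

end PartB

section LocKey

variable {p : H → H} {μ : ℝ} {ε : ℝ → ℝ}

lemma loc_key (hp : ∀ a b : H, ‖p a - p b‖ ≤ ‖a - b‖) (hμ0 : 0 < μ) (hεnn : ∀ t, 0 ≤ ε t)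
    {t₀ t₁ : ℝ} (hle : t₀ ≤ t₁) (hεi : IntervalIntegrable ε volume t₀ t₁)
    (hsmall : (∫ s in t₀..t₁, (2 + μ * ε s)) ≤ 1 / 2) (a : H) :
    ∃ z : ℝ → H, LocSol p μ ε a t₀ t₁ z ∧
      ∀ w : ℝ → H, LocSol p μ ε a t₀ t₁ w → ∀ t ∈ Icc t₀ t₁, w t = z t := by
  haveI hne : Nonempty ↥(Icc t₀ t₁) := (Set.nonempty_Icc.2 hle).to_subtype
  haveI : Nonempty C(↥(Icc t₀ t₁), H) := ⟨ContinuousMap.const _ 0⟩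
  set ext : C(↥(Icc t₀ t₁), H) → ℝ → H :=
    fun u s => u (projIcc t₀ t₁ hle s) with hext
  have hext_cont : ∀ u : C(↥(Icc t₀ t₁), H), Continuous (ext u) :=
    fun u => u.continuous.comp continuous_projIcc
  have hext_bd : ∀ u : C(↥(Icc t₀ t₁), H), ∀ s, ‖ext u s‖ ≤ ‖u‖ :=
    fun u s => u.norm_coe_le_norm _
  have hext_eq : ∀ u : C(↥(Icc t₀ t₁), H), ∀ t, ∀ ht : t ∈ Icc t₀ t₁,
      ext u t = u ⟨t, ht⟩ := by
    intro u t ht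
    simp only [hext, projIcc_of_mem hle ht]
  have hInt : ∀ u : C(↥(Icc t₀ t₁), H),
      IntervalIntegrable (fun s => Gfield p μ ε s (ext u s)) volume t₀ t₁ :=
    fun u => G_comp_integrable hp hμ0 hεnn hεi _ (hext_cont u) ‖u‖ (hext_bd u)
  have hIntSub : ∀ u : C(↥(Icc t₀ t₁), H), ∀ t ∈ Icc t₀ t₁,
      IntervalIntegrable (fun s => Gfield p μ ε s (ext u s)) volume t₀ t :=
    fun u t ht => (hInt u).mono_set
      (uIcc_subset_uIcc left_mem_uIcc (by rw [uIcc_of_le hle]; exact ht))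
  have hεiSub : ∀ t ∈ Icc t₀ t₁, IntervalIntegrable ε volume t₀ t :=
    fun t ht => hεi.mono_set
      (uIcc_subset_uIcc left_mem_uIcc (by rw [uIcc_of_le hle]; exact ht))
  have hTcont : ∀ u : C(↥(Icc t₀ t₁), H),
      Continuous fun t : ↥(Icc t₀ t₁) =>
        a + ∫ s in t₀..(t : ℝ), Gfield p μ ε s (ext u s) := by
    intro u
    apply Continuous.add continuous_const
    have h1 : ContinuousOn (fun b : ℝ => ∫ s in t₀..b, Gfield p μ ε s (ext u s))
        (uIcc t₀ t₁) :=
      intervalIntegral.continuousOn_primitive_interval' (hInt u) left_mem_uIcc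
    rw [uIcc_of_le hle] at h1
    exact h1.comp_continuous continuous_subtype_val (fun t => t.2)
  set T : C(↥(Icc t₀ t₁), H) → C(↥(Icc t₀ t₁), H) :=
    fun u => ⟨fun t => a + ∫ s in t₀..(t : ℝ), Gfield p μ ε s (ext u s), hTcont u⟩ with hT
  have hLnn : ∀ s, (0:ℝ) ≤ 2 + μ * ε s := by
    intro s; have := mul_nonneg hμ0.le (hεnn s); linarith
  have hcontr : ContractingWith (1/2 : ℝ≥0) T := by
    constructor
    · rw [← NNReal.coe_lt_coe]; norm_num
    · apply LipschitzWith.of_dist_le_mul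
      intro u v
      have hd0 : (0:ℝ) ≤ ((1/2 : ℝ≥0) : ℝ) * dist u v := by positivity
      rw [ContinuousMap.dist_le hd0]
      intro t
      have ht : (t : ℝ) ∈ Icc t₀ t₁ := t.2
      rw [hT]
      simp only [ContinuousMap.coe_mk]
      rw [dist_eq_norm, add_sub_add_left_eq_sub,
        ← intervalIntegral.integral_sub (hIntSub u _ ht) (hIntSub v _ ht)]
      have hbd : ‖∫ s in t₀..(t : ℝ),
          (Gfield p μ ε s (ext u s) - Gfield p μ ε s (ext v s))‖ ≤
          |∫ s in t₀..(t : ℝ), (2 + μ * ε s) * dist u v| := by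
        apply intervalIntegral.norm_integral_le_abs_of_norm_le
        · apply Eventually.of_forall
          intro s
          have h1 := G_lip hp hμ0 hεnn (p := p) s (ext u s) (ext v s)
          have h2 : ‖ext u s - ext v s‖ ≤ dist u v := by
            rw [hext]
            rw [← dist_eq_norm]
            exact ContinuousMap.dist_apply_le_dist _
          calc ‖Gfield p μ ε s (ext u s) - Gfield p μ ε s (ext v s)‖
              ≤ (2 + μ * ε s) * ‖ext u s - ext v s‖ := h1
            _ ≤ (2 + μ * ε s) * dist u v :=
              mul_le_mul_of_nonneg_left h2 (hLnn s)
        · exact ((L_intInt hμ0 (hεiSub _ ht)).mul_const _)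
      have heq : (∫ s in t₀..(t : ℝ), (2 + μ * ε s) * dist u v) =
          (∫ s in t₀..(t : ℝ), (2 + μ * ε s)) * dist u v :=
        intervalIntegral.integral_mul_const _ _
      have hmono : (∫ s in t₀..(t : ℝ), (2 + μ * ε s)) ≤
          ∫ s in t₀..t₁, (2 + μ * ε s) := by
        apply intervalIntegral.integral_mono_interval le_rfl ht.1 ht.2
        · exact Eventually.of_forall (fun s => hLnn s)
        · exact L_intInt hμ0 hεi
      have hnn : (0:ℝ) ≤ ∫ s in t₀..(t : ℝ), (2 + μ * ε s) := by
        apply intervalIntegral.integral_nonneg ht.1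
        intro s _; exact hLnn s
      rw [heq, abs_of_nonneg (mul_nonneg hnn dist_nonneg)] at hbd
      calc _ ≤ (∫ s in t₀..(t : ℝ), (2 + μ * ε s)) * dist u v := hbd
        _ ≤ (1/2) * dist u v := by
            apply mul_le_mul_of_nonneg_right _ dist_nonneg
            linarith
        _ = ((1/2 : ℝ≥0) : ℝ) * dist u v := by norm_num
  set u₀ := hcontr.fixedPoint with hu₀
  have hfix : T u₀ = u₀ := hcontr.fixedPoint_isFixedPt
  refine ⟨ext u₀, ⟨hInt u₀, ?_⟩, ?_⟩
  · intro t ht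
    have h := congrArg (fun u : C(↥(Icc t₀ t₁), H) => u ⟨t, ht⟩) hfix
    simp only [hT, ContinuousMap.coe_mk] at h
    rw [hext_eq u₀ t ht]
    exact h.symm
  · intro w hw
    obtain ⟨hwInt, hwrep⟩ := hw
    have hwcont : ContinuousOn w (Icc t₀ t₁) := by
      have h1 : ContinuousOn (fun t => a + ∫ s in t₀..t, Gfield p μ ε s (w s))
          (Icc t₀ t₁) := by
        apply ContinuousOn.add continuousOn_const
        have := intervalIntegral.continuousOn_primitive_interval' hwInt
          (left_mem_uIcc (a := t₀) (b := t₁))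
        rwa [uIcc_of_le hle] at this
      exact ContinuousOn.congr h1 hwrep
    set wc : C(↥(Icc t₀ t₁), H) := ⟨fun t => w ↑t,
      continuousOn_iff_continuous_restrict.1 hwcont⟩ with hwc
    have hext_w : ∀ s ∈ Icc t₀ t₁, ext wc s = w s := by
      intro s hs
      rw [hext_eq wc s hs]
      rfl
    have hfixw : Function.IsFixedPt T wc := by
      apply ContinuousMap.ext
      intro t
      have ht : (t : ℝ) ∈ Icc t₀ t₁ := t.2
      rw [hT]
      simp only [ContinuousMap.coe_mk]
      have hcongr : (∫ s in t₀..(t : ℝ), Gfield p μ ε s (ext wc s)) =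
          ∫ s in t₀..(t : ℝ), Gfield p μ ε s (w s) := by
        apply intervalIntegral.integral_congr
        intro s hs
        rw [uIcc_of_le ht.1] at hs
        have hs' : s ∈ Icc t₀ t₁ := ⟨hs.1, le_trans hs.2 ht.2⟩
        show Gfield p μ ε s (ext wc s) = Gfield p μ ε s (w s)
        rw [hext_w s hs']
      rw [hcongr, ← hwrep _ ht]
      rfl
    have : wc = u₀ := hcontr.fixedPoint_unique hfixw
    intro t ht
    rw [hext_eq u₀ t ht, ← this]
    rfl

end LocKey

/-- Solution of the `y`-ODE on `[0, B]` with initial value `a`. -/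
def SolOn (p : H → H) (μ : ℝ) (ε : ℝ → ℝ) (a : H) (B : ℝ) (z : ℝ → H) : Prop :=
  IntervalIntegrable (fun s => Gfield p μ ε s (z s)) volume 0 B ∧
    ∀ t ∈ Icc (0:ℝ) B, z t = a + ∫ s in (0:ℝ)..t, Gfield p μ ε s (z s)

section PartC

variable {p : H → H} {μ : ℝ} {ε : ℝ → ℝ}

lemma II_same {F : Type*} [NormedAddCommGroup F] (f : ℝ → F) (c : ℝ) :
    IntervalIntegrable f volume c c := IntervalIntegrable.refl

lemma eps_ii (hεint : ∀ b : ℝ, 0 < b → IntervalIntegrable ε volume 0 b)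
    {c d : ℝ} (hc : 0 ≤ c) (hcd : c ≤ d) : IntervalIntegrable ε volume c d := by
  rcases eq_or_lt_of_le (hc.trans hcd) with h | h
  · have hc0 : c = 0 := le_antisymm (hcd.trans h.symm.le) hc
    have hd0 : d = 0 := h.symm
    rw [hc0, hd0]
  · exact (hεint d h).mono_set (by
      rw [uIcc_of_le (hc.trans hcd), uIcc_of_le hcd]
      exact Icc_subset_Icc hc le_rfl)

lemma solOn_restrict {a : H} {B b b' : ℝ} {z : ℝ → H}
    (hz : SolOn p μ ε a B z) (hb0 : 0 ≤ b) (hbb' : b ≤ b') (hb'B : b' ≤ B) :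
    LocSol p μ ε (z b) b b' z := by
  obtain ⟨hint, hrep⟩ := hz
  have hB0 : 0 ≤ B := hb0.trans (hbb'.trans hb'B)
  have hsub : ∀ c d : ℝ, 0 ≤ c → c ≤ d → d ≤ B →
      IntervalIntegrable (fun s => Gfield p μ ε s (z s)) volume c d := by
    intro c d h1 h2 h3
    exact hint.mono_set (by
      rw [uIcc_of_le hB0, uIcc_of_le h2]
      exact Icc_subset_Icc h1 h3)
  refine ⟨hsub b b' hb0 hbb' hb'B, ?_⟩
  intro t ht
  have ht0 : 0 ≤ t := hb0.trans ht.1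
  have htB : t ≤ B := ht.2.trans hb'B
  have h1 : z t = a + ∫ s in (0:ℝ)..t, Gfield p μ ε s (z s) := hrep t ⟨ht0, htB⟩
  have h2 : z b = a + ∫ s in (0:ℝ)..b, Gfield p μ ε s (z s) :=
    hrep b ⟨hb0, hbb'.trans hb'B⟩
  have h3 : (∫ s in (0:ℝ)..b, Gfield p μ ε s (z s)) +
      (∫ s in b..t, Gfield p μ ε s (z s)) = ∫ s in (0:ℝ)..t, Gfield p μ ε s (z s) :=
    intervalIntegral.integral_add_adjacent_intervals
      (hsub 0 b le_rfl hb0 (hbb'.trans hb'B)) (hsub b t hb0 ht.1 htB)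
  rw [h1, h2, ← h3, add_assoc]

lemma partition (hμ0 : 0 < μ)
    (hεint : ∀ b : ℝ, 0 < b → IntervalIntegrable ε volume 0 b) {B : ℝ} (hB : 0 ≤ B) :
    ∃ δ : ℝ, 0 < δ ∧ ∀ b b' : ℝ, 0 ≤ b → b ≤ b' → b' ≤ B → b' - b ≤ δ →
      (∫ s in b..b', (2 + μ * ε s)) ≤ 1 / 2 := by
  have hLii : ∀ c d : ℝ, 0 ≤ c → c ≤ d →
      IntervalIntegrable (fun s => 2 + μ * ε s) volume c d :=
    fun c d hc hcd => L_intInt hμ0 (eps_ii hεint hc hcd)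
  have hcont : ContinuousOn (fun t => ∫ s in (0:ℝ)..t, (2 + μ * ε s)) (Icc 0 B) := by
    have := intervalIntegral.continuousOn_primitive_interval'
      (hLii 0 B le_rfl hB) (left_mem_uIcc (a := (0:ℝ)) (b := B))
    rwa [uIcc_of_le hB] at this
  have huc : UniformContinuousOn (fun t => ∫ s in (0:ℝ)..t, (2 + μ * ε s)) (Icc 0 B) :=
    isCompact_Icc.uniformContinuousOn_of_continuous hcont
  rw [Metric.uniformContinuousOn_iff] at huc
  obtain ⟨δ, hδ0, hδ⟩ := huc (1/2) (by norm_num)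
  refine ⟨δ/2, by positivity, ?_⟩
  intro b b' hb0 hbb' hb'B hdiff
  have hb'0 : 0 ≤ b' := hb0.trans hbb'
  have hmemb : b ∈ Icc (0:ℝ) B := ⟨hb0, hbb'.trans hb'B⟩
  have hmemb' : b' ∈ Icc (0:ℝ) B := ⟨hb'0, hb'B⟩
  have hdist : dist b' b < δ := by
    rw [Real.dist_eq, abs_of_nonneg (by linarith)]
    linarith
  have h5 := hδ b' hmemb' b hmemb hdist
  rw [Real.dist_eq] at h5
  have h6 : (∫ s in (0:ℝ)..b', (2 + μ * ε s)) - (∫ s in (0:ℝ)..b, (2 + μ * ε s)) =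
      ∫ s in b..b', (2 + μ * ε s) :=
    intervalIntegral.integral_interval_sub_left (hLii 0 b' le_rfl hb'0) (hLii 0 b le_rfl hb0)
  rw [h6] at h5
  calc (∫ s in b..b', (2 + μ * ε s)) ≤ |∫ s in b..b', (2 + μ * ε s)| := le_abs_self _
    _ ≤ 1/2 := h5.le

lemma solOn_exists (hp : ∀ a b : H, ‖p a - p b‖ ≤ ‖a - b‖) (hμ0 : 0 < μ)
    (hεnn : ∀ t, 0 ≤ ε t) (hεint : ∀ b : ℝ, 0 < b → IntervalIntegrable ε volume 0 b)
    (a : H) {B : ℝ} (hB : 0 ≤ B) : ∃ y : ℝ → H, SolOn p μ ε a B y := by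
  obtain ⟨δ, hδ0, hpart⟩ := partition hμ0 hεint hB
  have key : ∀ n : ℕ, ∃ y : ℝ → H, SolOn p μ ε a (min (n * δ) B) y := by
    intro n
    induction n with
    | zero =>
      refine ⟨fun _ => a, ?_, ?_⟩
      · simp only [Nat.cast_zero, zero_mul, min_eq_left hB]
        exact II_same _ _
      · intro t ht
        simp only [Nat.cast_zero, zero_mul, min_eq_left hB] at ht
        have : t = 0 := le_antisymm ht.2 ht.1
        rw [this, intervalIntegral.integral_same, add_zero]
    | succ n ih =>
      obtain ⟨y, hy⟩ := ih
      set b := min ((n:ℝ) * δ) B with hbdef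
      set b' := min (((n:ℝ) + 1) * δ) B with hb'def
      have hb0 : 0 ≤ b := le_min (by positivity) hB
      have hbb' : b ≤ b' := by
        apply min_le_min _ le_rfl
        nlinarith
      have hb'B : b' ≤ B := min_le_right _ _
      have hdiff : b' - b ≤ δ := by
        rcases le_total ((n:ℝ) * δ) B with h | h
        · have hbe : b = (n:ℝ) * δ := min_eq_left h
          have : b' ≤ ((n:ℝ) + 1) * δ := min_le_left _ _
          rw [hbe]; nlinarith
        · have hbe : b = B := min_eq_right h
          have : b' ≤ B := min_le_right _ _
          rw [hbe]; linarith
      have hsm := hpart b b' hb0 hbb' hb'B hdiff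
      obtain ⟨z, hz, -⟩ := loc_key hp hμ0 hεnn hbb' (eps_ii hεint hb0 hbb') hsm (y b)
      have hzb : z b = y b := by
        have := hz.2 b (left_mem_Icc.2 hbb')
        rwa [intervalIntegral.integral_same, add_zero] at this
      refine ⟨fun t => if t ≤ b then y t else z t, ?_, ?_⟩
      · simp only [Nat.cast_add, Nat.cast_one]
        rw [← hb'def]
        have i1 : IntervalIntegrable
            (fun s => Gfield p μ ε s (if s ≤ b then y s else z s)) volume 0 b := by
          apply II_congr hy.1
          intro s hs
          rw [uIoc_of_le hb0] at hs
          simp only [if_pos hs.2]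
        have i2 : IntervalIntegrable
            (fun s => Gfield p μ ε s (if s ≤ b then y s else z s)) volume b b' := by
          apply II_congr hz.1
          intro s hs
          rw [uIoc_of_le hbb'] at hs
          simp only [if_neg (not_le.2 hs.1)]
        exact i1.trans i2
      · intro t ht
        simp only [Nat.cast_add, Nat.cast_one] at ht
        rw [← hb'def] at ht
        by_cases htb : t ≤ b
        · simp only [if_pos htb]
          have hrep := hy.2 t ⟨ht.1, htb⟩
          rw [hrep]
          congr 1
          apply intervalIntegral.integral_congr
          intro s hs
          rw [uIcc_of_le ht.1] at hs
          simp only [if_pos (hs.2.trans htb)]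
        · simp only [if_neg htb]
          push_neg at htb
          have hrept : z t = y b + ∫ s in b..t, Gfield p μ ε s (z s) :=
            hz.2 t ⟨htb.le, ht.2⟩
          have hrepb : y b = a + ∫ s in (0:ℝ)..b, Gfield p μ ε s (y s) :=
            hy.2 b ⟨hb0, le_rfl⟩
          have c1 : (∫ s in (0:ℝ)..b, Gfield p μ ε s (y s)) =
              ∫ s in (0:ℝ)..b, Gfield p μ ε s (if s ≤ b then y s else z s) := by
            apply intervalIntegral.integral_congr
            intro s hs
            rw [uIcc_of_le hb0] at hs
            simp only [if_pos hs.2]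
          have c2 : (∫ s in b..t, Gfield p μ ε s (z s)) =
              ∫ s in b..t, Gfield p μ ε s (if s ≤ b then y s else z s) := by
            apply intervalIntegral.integral_congr
            intro s hs
            rw [uIcc_of_le htb.le] at hs
            by_cases hsb : s ≤ b
            · have hsbe : s = b := le_antisymm hsb hs.1
              subst hsbe
              simp only [if_pos hsb, hzb]
            · simp only [if_neg hsb]
          have i1 : IntervalIntegrable
              (fun s => Gfield p μ ε s (if s ≤ b then y s else z s)) volume 0 b := by
            apply II_congr hy.1
            intro s hs
            rw [uIoc_of_le hb0] at hs
            simp only [if_pos hs.2]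
          have i2 : IntervalIntegrable
              (fun s => Gfield p μ ε s (if s ≤ b then y s else z s)) volume b t := by
            apply II_congr (hz.1.mono_set ?_)
            · intro s hs
              rw [uIoc_of_le htb.le] at hs
              simp only [if_neg (not_le.2 hs.1)]
            · rw [uIcc_of_le hbb', uIcc_of_le htb.le]
              exact Icc_subset_Icc le_rfl ht.2
          have hadd := intervalIntegral.integral_add_adjacent_intervals i1 i2
          rw [hrept, hrepb, c1, c2, add_assoc, hadd]
  obtain ⟨n, hn⟩ := exists_nat_ge (B / δ)
  obtain ⟨y, hy⟩ := key n
  have : min ((n:ℝ) * δ) B = B := by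
    apply min_eq_right
    rw [div_le_iff₀ hδ0] at hn
    linarith
  rw [this] at hy
  exact ⟨y, hy⟩

lemma solOn_unique (hp : ∀ a b : H, ‖p a - p b‖ ≤ ‖a - b‖) (hμ0 : 0 < μ)
    (hεnn : ∀ t, 0 ≤ ε t) (hεint : ∀ b : ℝ, 0 < b → IntervalIntegrable ε volume 0 b)
    {a : H} {B : ℝ} (hB : 0 ≤ B) {z₁ z₂ : ℝ → H}
    (h1 : SolOn p μ ε a B z₁) (h2 : SolOn p μ ε a B z₂) :
    ∀ t ∈ Icc (0:ℝ) B, z₁ t = z₂ t := by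
  obtain ⟨δ, hδ0, hpart⟩ := partition hμ0 hεint hB
  have key : ∀ n : ℕ, ∀ t ∈ Icc (0:ℝ) (min ((n:ℝ) * δ) B), z₁ t = z₂ t := by
    intro n
    induction n with
    | zero =>
      intro t ht
      simp only [Nat.cast_zero, zero_mul, min_eq_left hB] at ht
      have ht0 : t = 0 := le_antisymm ht.2 ht.1
      have e1 := h1.2 0 ⟨le_rfl, hB⟩
      have e2 := h2.2 0 ⟨le_rfl, hB⟩
      rw [intervalIntegral.integral_same, add_zero] at e1 e2
      rw [ht0, e1, e2]
    | succ n ih =>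
      intro t ht
      set b := min ((n:ℝ) * δ) B with hbdef
      set b' := min (((n:ℝ) + 1) * δ) B with hb'def
      have hb0 : 0 ≤ b := le_min (by positivity) hB
      have hbb' : b ≤ b' := by
        apply min_le_min _ le_rfl
        nlinarith
      have hb'B : b' ≤ B := min_le_right _ _
      have hdiff : b' - b ≤ δ := by
        rcases le_total ((n:ℝ) * δ) B with h | h
        · have hbe : b = (n:ℝ) * δ := min_eq_left h
          have : b' ≤ ((n:ℝ) + 1) * δ := min_le_left _ _
          rw [hbe]; nlinarith
        · have hbe : b = B := min_eq_right h
          have : b' ≤ B := min_le_right _ _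
          rw [hbe]; linarith
      simp only [Nat.cast_add, Nat.cast_one] at ht
      rw [← hb'def] at ht
      by_cases htb : t ≤ b
      · exact ih t ⟨ht.1, htb⟩
      · push_neg at htb
        have hbeq : z₁ b = z₂ b := ih b ⟨hb0, le_rfl⟩
        have l1 := solOn_restrict h1 hb0 hbb' hb'B
        have l2 := solOn_restrict h2 hb0 hbb' hb'B
        rw [← hbeq] at l2
        have hsm := hpart b b' hb0 hbb' hb'B hdiff
        obtain ⟨z, -, huniq⟩ :=
          loc_key hp hμ0 hεnn hbb' (eps_ii hεint hb0 hbb') hsm (z₁ b)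
        rw [huniq z₁ l1 t ⟨htb.le, ht.2⟩, huniq z₂ l2 t ⟨htb.le, ht.2⟩]
  obtain ⟨n, hn⟩ := exists_nat_ge (B / δ)
  have hm : min ((n:ℝ) * δ) B = B := by
    apply min_eq_right
    rw [div_le_iff₀ hδ0] at hn
    linarith
  intro t ht
  exact key n t (by rw [hm]; exact ht)

end PartC


/-- Representation of the unique strong solution `(x, v)` of the
regularized Newton Cauchy problem via the proximal mapping and Yosida approximation
applied to the unique strong solution `y` of the associated classical ODE. -/
theorem stmt1 (Φ : H → EReal) (hproper : ProperFn Φ) (hconv : EConvexOn Φ)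
    (hlsc : LowerSemicontinuous Φ)
    (lam μ : ℝ) (hlam : 0 < lam) (hμ : μ = 1 / lam)
    (ε : ℝ → ℝ) (hεnn : ∀ t, 0 ≤ ε t)
    (hεint : ∀ b : ℝ, 0 < b → IntervalIntegrable ε volume 0 b)
    (x₀ v₀ : H) (h₀ : v₀ ∈ subdiff Φ x₀)
    (p : H → H)
    (hprox : ∀ y ξ : H,
      Φ (p y) + (((1 / (2 * μ)) * ‖y - p y‖ ^ 2 : ℝ) : EReal) ≤
        Φ ξ + (((1 / (2 * μ)) * ‖y - ξ‖ ^ 2 : ℝ) : EReal)) :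
    ∃ y : ℝ → H,
      (IsYSol p μ ε y ∧ y 0 = x₀ + μ • v₀) ∧
      (∀ y₁ : ℝ → H, (IsYSol p μ ε y₁ ∧ y₁ 0 = x₀ + μ • v₀) →
        ∀ t : ℝ, 0 ≤ t → y₁ t = y t) ∧
      (∀ x v : ℝ → H, (IsStrongSol Φ lam ε x v ∧ x 0 = x₀ ∧ v 0 = v₀) →
        ∀ t : ℝ, 0 ≤ t → x t = p (y t) ∧ v t = μ⁻¹ • (y t - p (y t))) := by
  have hμ0 : 0 < μ := by rw [hμ]; positivity
  have hμlam : μ * lam = 1 := by rw [hμ]; field_simp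
  have hp : ∀ a b : H, ‖p a - p b‖ ≤ ‖a - b‖ :=
    prox_nonexpansive hproper hconv hμ0 hprox
  set a : H := x₀ + μ • v₀ with hadef
  -- build the global solution
  have hex : ∀ n : ℕ, ∃ z : ℝ → H, SolOn p μ ε a (n : ℝ) z :=
    fun n => solOn_exists hp hμ0 hεnn hεint a (Nat.cast_nonneg n)
  choose ys hys using hex
  have hcons : ∀ n m : ℕ, n ≤ m → ∀ t ∈ Icc (0:ℝ) (n:ℝ), ys n t = ys m t := by
    intro n m hnm t ht
    have hm : SolOn p μ ε a (n:ℝ) (ys m) := by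
      obtain ⟨hi, hr⟩ := hys m
      refine ⟨hi.mono_set ?_, fun s hs => hr s ⟨hs.1, hs.2.trans (Nat.cast_le.2 hnm)⟩⟩
      rw [uIcc_of_le (Nat.cast_nonneg n), uIcc_of_le (Nat.cast_nonneg m)]
      exact Icc_subset_Icc le_rfl (Nat.cast_le.2 hnm)
    exact solOn_unique hp hμ0 hεnn hεint (Nat.cast_nonneg n) (hys n) hm t ht
  set y : ℝ → H := fun t => ys (⌊t⌋₊ + 1) t with hydef
  have hagree : ∀ (n : ℕ) (t : ℝ), 0 ≤ t → t ≤ (n:ℝ) → y t = ys n t := by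
    intro n t ht0 htn
    have h1 : t ≤ ((⌊t⌋₊ + 1 : ℕ) : ℝ) := by
      push_cast
      exact (Nat.lt_floor_add_one t).le
    calc y t = ys (⌊t⌋₊ + 1) t := rfl
      _ = ys (max n (⌊t⌋₊ + 1)) t :=
        hcons _ _ (le_max_right _ _) t ⟨ht0, h1⟩
      _ = ys n t := by
        refine (hcons n _ (le_max_left _ _) t ⟨ht0, htn⟩).symm
  have hySol : ∀ B : ℝ, 0 ≤ B → SolOn p μ ε a B y := by
    intro B hB
    obtain ⟨n, hn⟩ := exists_nat_ge B
    obtain ⟨hi, hr⟩ := hys n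
    have hiB : IntervalIntegrable (fun s => Gfield p μ ε s (ys n s)) volume 0 B :=
      hi.mono_set (by
        rw [uIcc_of_le hB, uIcc_of_le (Nat.cast_nonneg n)]
        exact Icc_subset_Icc le_rfl hn)
    constructor
    · apply II_congr hiB
      intro s hs
      rw [uIoc_of_le hB] at hs
      rw [hagree n s hs.1.le (hs.2.trans hn)]
    · intro t ht
      rw [hagree n t ht.1 (ht.2.trans hn), hr t ⟨ht.1, ht.2.trans hn⟩]
      congr 1
      apply intervalIntegral.integral_congr
      intro s hs
      rw [uIcc_of_le ht.1] at hs
      show Gfield p μ ε s (ys n s) = Gfield p μ ε s (y s)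
      rw [hagree n s hs.1 ((hs.2.trans ht.2).trans hn)]
  have hy0 : y 0 = a := by
    have h1 := (hys 1).2 0 ⟨le_rfl, by norm_num⟩
    rw [intervalIntegral.integral_same, add_zero] at h1
    rw [hagree 1 0 le_rfl (by norm_num), h1]
  -- algebraic identity for the field
  have halg : ∀ (s : ℝ) (z : H),
      Gfield p μ ε s z + μ • (μ⁻¹ • (z - p z)) + (μ * ε s) • p z = 0 := by
    intro s z
    rw [smul_smul, mul_inv_cancel₀ hμ0.ne', one_smul]
    simp only [Gfield]
    module
  have halg' : ∀ (s : ℝ) (z w : H),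
      w + μ • (μ⁻¹ • (z - p z)) + (μ * ε s) • p z = 0 → w = Gfield p μ ε s z := by
    intro s z w hw
    have h2 : w - Gfield p μ ε s z =
        (w + μ • (μ⁻¹ • (z - p z)) + (μ * ε s) • p z) -
          (Gfield p μ ε s z + μ • (μ⁻¹ • (z - p z)) + (μ * ε s) • p z) := by abel
    rw [hw, halg s z, sub_zero] at h2
    exact sub_eq_zero.1 h2
  -- y is an IsYSol
  have hyYSol : IsYSol p μ ε y := by
    refine ⟨fun s => Gfield p μ ε s (y s), fun b hb => (hySol b hb.le).1, ?_, ?_⟩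
    · intro t ht
      rw [hy0]
      exact (hySol t ht).2 t ⟨ht, le_rfl⟩
    · exact Eventually.of_forall fun t => halg t (y t)
  -- uniqueness among IsYSol
  have huniq : ∀ y₁ : ℝ → H, (IsYSol p μ ε y₁ ∧ y₁ 0 = x₀ + μ • v₀) →
      ∀ t : ℝ, 0 ≤ t → y₁ t = y t := by
    rintro y₁ ⟨⟨y₁', hint, hrep, hae⟩, hy₁0⟩ t ht
    have hae' : ∀ᵐ s ∂(volume : Measure ℝ), s ∈ Ici (0:ℝ) →
        y₁' s = Gfield p μ ε s (y₁ s) := by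
      have h3 := (ae_restrict_iff' measurableSet_Ici).1 hae
      filter_upwards [h3] with s hs hs0
      exact halg' s (y₁ s) (y₁' s) (hs hs0)
    have hIcongr : ∀ b : ℝ, 0 ≤ b →
        IntervalIntegrable (fun s => Gfield p μ ε s (y₁ s)) volume 0 b ∧
        ∀ c ∈ Icc (0:ℝ) b, (∫ s in (0:ℝ)..c, y₁' s) =
          ∫ s in (0:ℝ)..c, Gfield p μ ε s (y₁ s) := by
      intro b hb
      have haeb : ∀ c, 0 ≤ c → (∀ᵐ s ∂(volume.restrict (Set.uIoc (0:ℝ) c)),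
          y₁' s = Gfield p μ ε s (y₁ s)) := by
        intro c hc
        filter_upwards [ae_restrict_of_ae hae', ae_restrict_mem measurableSet_uIoc]
          with s h1 h2
        rw [uIoc_of_le hc] at h2
        exact h1 (le_of_lt h2.1)
      constructor
      · rcases eq_or_lt_of_le hb with hb0 | hb0
        · rw [← hb0]
        · exact intervalIntegrable_iff.2
            ((intervalIntegrable_iff.1 (hint b hb0)).congr (haeb b hb))
      · intro c hc
        apply intervalIntegral.integral_congr_ae
        filter_upwards [hae'] with s h1 hs
        rw [uIoc_of_le hc.1] at hs
        exact h1 (le_of_lt hs.1)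
    have hsol : SolOn p μ ε a t y₁ := by
      refine ⟨(hIcongr t ht).1, ?_⟩
      intro s hs
      rw [← (hIcongr t ht).2 s hs, hadef, ← hy₁0, ← hrep s hs.1]
    exact solOn_unique hp hμ0 hεnn hεint ht hsol (hySol t ht) t ⟨ht, le_rfl⟩
  refine ⟨y, ⟨hyYSol, hy0⟩, huniq, ?_⟩
  -- representation of a strong solution
  rintro x v ⟨⟨x', v', hints, hxrep, hvrep, hincl, haexv⟩, hx0, hv0⟩ t ht
  have hpxy : ∀ s : ℝ, 0 ≤ s → p (x s + μ • v s) = x s := fun s hs =>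
    prox_of_subdiff hproper hconv hμ0 hprox (hincl s hs)
  have hy₁Sol : IsYSol p μ ε (fun s => x s + μ • v s) := by
    refine ⟨fun s => x' s + μ • v' s, ?_, ?_, ?_⟩
    · intro b hb
      exact ((hints b hb).1.add ((hints b hb).2.smul μ))
    · intro s hs
      have h1 := hxrep s hs
      have h2 := hvrep s hs
      have h3 : (∫ u in (0:ℝ)..s, (x' u + μ • v' u)) =
          (∫ u in (0:ℝ)..s, x' u) + μ • ∫ u in (0:ℝ)..s, v' u := by
        rcases eq_or_lt_of_le hs with hs0 | hs0
        · rw [← hs0]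
          simp
        · have ha1 := (hints s hs0).1
          have ha2 : IntervalIntegrable (fun u => μ • v' u) volume 0 s :=
            (hints s hs0).2.smul μ
          rw [intervalIntegral.integral_add ha1 ha2, intervalIntegral.integral_smul]
      show x s + μ • v s = (x 0 + μ • v 0) + ∫ u in (0:ℝ)..s, (x' u + μ • v' u)
      rw [h3, h1, h2]
      simp only [smul_add]
      abel
    · filter_upwards [haexv, ae_restrict_mem measurableSet_Ici] with s hs hs0
      show x' s + μ • v' s + μ • (μ⁻¹ • ((x s + μ • v s) - p (x s + μ • v s))) +
        (μ * ε s) • p (x s + μ • v s) = 0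
      have hpx : p (x s + μ • v s) = x s := hpxy s hs0
      have e1 : (x s + μ • v s) - x s = μ • v s := add_sub_cancel_left _ _
      rw [hpx, e1, smul_smul μ μ⁻¹, mul_inv_cancel₀ hμ0.ne', one_smul]
      have h7 : μ • (lam • x' s) = x' s := by
        rw [smul_smul, hμlam, one_smul]
      have key : x' s + μ • v' s + μ • v s + (μ * ε s) • x s =
          μ • (lam • x' s + v' s + v s + ε s • x s) + (x' s - μ • (lam • x' s)) := by
        simp only [smul_add, mul_smul]
        abel
      rw [key, hs, smul_zero, h7, zero_add, sub_self]
  have hy₁0 : x 0 + μ • v 0 = x₀ + μ • v₀ := by rw [hx0, hv0]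
  have heq : x t + μ • v t = y t := huniq _ ⟨hy₁Sol, hy₁0⟩ t ht
  constructor
  · rw [← heq]
    exact (hpxy t ht).symm
  · rw [← heq, hpxy t ht, add_sub_cancel_left, smul_smul, inv_mul_cancel₀ hμ0.ne',
      one_smul]
end
end

section
/- Let H be a real Hilbert space, let Θ : H → ℝ be a nonnegative convex differentiable function, let Ψ : H → ℝ be a convex differentiable function with m := inf Ψ > −∞, and let ε : [0,+∞) → [0,+∞) be a nonincreasing C¹ function (hence bounded, decreasing to a limit). If y : [0,+∞) → H is a solution of ẏ(t) + ∇Θ(y(t)) + ε(t)∇Ψ(y(t)) = 0, then for every T > 0, ∫₀^T ‖ẏ(t)‖² dt ≤ Θ(y(0)) + ε(0)Ψ(y(0)) + |m| ε(T) + m ∫₀^T ε̇(t) dt; consequently y has finite energy: ∫₀^{+∞} ‖ẏ(t)‖² dt < +∞. -/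
noncomputable section
open MeasureTheory Filter Set
open scoped InnerProductSpace RealInnerProductSpace Topology ENNReal

variable {H : Type*} [NormedAddCommGroup H] [InnerProductSpace ℝ H] [CompleteSpace H]

private lemma antitone_deriv_nonpos {f : ℝ → ℝ} {d t : ℝ}
    (hmono : AntitoneOn f (Set.Ici 0)) (hd : HasDerivAt f d t) (ht : (0:ℝ) ≤ t) : d ≤ 0 := by
  have h1 : Tendsto (slope f t) (𝓝[>] t) (𝓝 d) := by
    have h2 := (hd.hasDerivWithinAt (s := Set.Ioi t))
    have h3 := hasDerivWithinAt_iff_tendsto_slope.1 h2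
    rwa [Set.diff_singleton_eq_self (by simp)] at h3
  refine le_of_tendsto h1 ?_
  filter_upwards [self_mem_nhdsWithin] with x hx
  have hx' : t < x := hx
  have hfx : f x ≤ f t := hmono ht (ht.trans hx'.le) hx'.le
  rw [slope_def_field]
  exact div_nonpos_iff.2 (Or.inr ⟨by linarith, by linarith⟩)

private lemma exists_bound_of_locally_bounded {K : Set ℝ} (hK : IsCompact K) (f : ℝ → ℝ)
    (h : ∀ x ∈ K, ∃ M : ℝ, ∃ V ∈ 𝓝 x, ∀ z ∈ V ∩ K, f z ≤ M) :
    ∃ M, ∀ x ∈ K, f x ≤ M := by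
  choose! M V hV hMV using h
  obtain ⟨t, ht⟩ := hK.elim_nhds_subcover' (fun x hx => V x) (fun x hx => hV x hx)
  rcases t.eq_empty_or_nonempty with rfl | htne
  · exact ⟨0, fun x hx => absurd (ht hx) (by simp)⟩
  · refine ⟨t.sup' htne (fun x => M x), fun x hx => ?_⟩
    obtain ⟨x₀, hx₀t, hx₀⟩ := Set.mem_iUnion₂.1 (ht hx)
    exact (hMV x₀ x₀.2 x ⟨hx₀, hx⟩).trans (Finset.le_sup' (fun x : K => M x) hx₀t)

private lemma grad_local_bound {H : Type*} [NormedAddCommGroup H] [InnerProductSpace ℝ H]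
    [CompleteSpace H] (f : H → ℝ) (hc : ConvexOn ℝ Set.univ f)
    (hd : Differentiable ℝ f) (x : H) :
    ∃ M : ℝ, ∃ V ∈ 𝓝 x, ∀ z ∈ V, ‖gradient f z‖ ≤ M := by
  have hlip : LocallyLipschitzOn Set.univ f :=
    (hc.locallyLipschitzOn_iff_continuousOn isOpen_univ).2 hd.continuous.continuousOn
  obtain ⟨K, s, hs, hK⟩ := hlip (Set.mem_univ x)
  rw [nhdsWithin_univ] at hs
  refine ⟨K, interior s, interior_mem_nhds.2 hs, fun z hz => ?_⟩
  have h2 : ‖fderiv ℝ f z‖ ≤ K :=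
    (hd z).hasFDerivAt.le_of_lipschitzOn (mem_interior_iff_mem_nhds.1 hz) hK
  calc ‖gradient f z‖ = ‖fderiv ℝ f z‖ :=
        (InnerProductSpace.toDual ℝ H).symm.norm_map _
    _ ≤ K := h2


/-- Energy estimate for the multiscale gradient system
`ẏ(t) + ∇Θ(y(t)) + ε(t) ∇Ψ(y(t)) = 0`, and the resulting finite-energy property. -/
theorem stmt12 (Θ Ψ : H → ℝ)
    (hΘc : ConvexOn ℝ Set.univ Θ) (hΘd : Differentiable ℝ Θ) (hΘnn : ∀ x, 0 ≤ Θ x)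
    (hΨc : ConvexOn ℝ Set.univ Ψ) (hΨd : Differentiable ℝ Ψ)
    (m : ℝ) (hm : IsGLB (Set.range Ψ) m)
    (ε ε' : ℝ → ℝ) (hεnn : ∀ t, 0 ≤ ε t)
    (hεderiv : ∀ t ∈ Set.Ici (0:ℝ), HasDerivAt ε (ε' t) t)
    (hεC1 : ContinuousOn ε' (Set.Ici (0:ℝ)))
    (hεmono : AntitoneOn ε (Set.Ici (0:ℝ)))
    (y y' : ℝ → H)
    (hy : ∀ t ∈ Set.Ici (0:ℝ), HasDerivAt y (y' t) t)
    (heq : ∀ t ∈ Set.Ici (0:ℝ), y' t + gradient Θ (y t) + ε t • gradient Ψ (y t) = 0) :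
    (∀ T : ℝ, 0 < T →
      (∫ t in (0:ℝ)..T, ‖y' t‖ ^ 2) ≤
        Θ (y 0) + ε 0 * Ψ (y 0) + |m| * ε T + m * (∫ t in (0:ℝ)..T, ε' t)) ∧
    ∫⁻ t in Set.Ioi (0:ℝ), ENNReal.ofReal (‖y' t‖ ^ 2) < ⊤ := by
  have hΨm : ∀ x, m ≤ Ψ x := fun x => hm.1 ⟨x, rfl⟩
  have hy'eq : ∀ t ∈ Set.Ici (0:ℝ),
      gradient Θ (y t) + ε t • gradient Ψ (y t) = -y' t := by
    intro t ht
    have h := heq t ht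
    rw [add_assoc] at h
    exact eq_neg_of_add_eq_zero_right h
  -- chain rules
  have hΘchain : ∀ t ∈ Set.Ici (0:ℝ),
      HasDerivAt (fun s => Θ (y s)) ⟪gradient Θ (y t), y' t⟫ t := by
    intro t ht
    have h1 : HasFDerivAt Θ (InnerProductSpace.toDual ℝ H (gradient Θ (y t))) (y t) :=
      (hΘd (y t)).hasGradientAt.hasFDerivAt
    exact h1.comp_hasDerivAt t (hy t ht)
  have hΨchain : ∀ t ∈ Set.Ici (0:ℝ),
      HasDerivAt (fun s => Ψ (y s)) ⟪gradient Ψ (y t), y' t⟫ t := by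
    intro t ht
    have h1 : HasFDerivAt Ψ (InnerProductSpace.toDual ℝ H (gradient Ψ (y t))) (y t) :=
      (hΨd (y t)).hasGradientAt.hasFDerivAt
    exact h1.comp_hasDerivAt t (hy t ht)
  -- energy derivative
  have hEderiv : ∀ t ∈ Set.Ici (0:ℝ),
      HasDerivAt (fun s => Θ (y s) + ε s * Ψ (y s))
        (-(‖y' t‖ ^ 2) + ε' t * Ψ (y t)) t := by
    intro t ht
    have hsum := (hΘchain t ht).add ((hεderiv t ht).mul (hΨchain t ht))
    have hkey : ⟪gradient Θ (y t), y' t⟫ + ε t * ⟪gradient Ψ (y t), y' t⟫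
        = -(‖y' t‖ ^ 2) := by
      have h1 : ⟪gradient Θ (y t) + ε t • gradient Ψ (y t), y' t⟫
          = ⟪gradient Θ (y t), y' t⟫ + ε t * ⟪gradient Ψ (y t), y' t⟫ := by
        rw [inner_add_left, real_inner_smul_left]
      rw [← h1, hy'eq t ht, inner_neg_left, real_inner_self_eq_norm_sq]
    refine hsum.congr_deriv ?_
    linarith [hkey]
  -- continuity of y on [0,∞)
  have ycont : ContinuousOn y (Set.Ici (0:ℝ)) :=
    fun t ht => ((hy t ht).continuousAt).continuousWithinAt
  have hεle : ∀ t ∈ Set.Ici (0:ℝ), ε t ≤ ε 0 :=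
    fun t ht => hεmono Set.self_mem_Ici ht ht
  have hε'np : ∀ t ∈ Set.Ici (0:ℝ), ε' t ≤ 0 :=
    fun t ht => antitone_deriv_nonpos hεmono (hεderiv t ht) ht
  have hy'deriv : ∀ t ∈ Set.Ici (0:ℝ), y' t = deriv y t :=
    fun t ht => ((hy t ht).deriv).symm
  -- boundedness of ‖y'‖² on compacts
  have hbound : ∀ T : ℝ, ∃ C : ℝ, ∀ t ∈ Set.Icc (0:ℝ) T, ‖y' t‖ ^ 2 ≤ C := by
    intro T
    apply exists_bound_of_locally_bounded isCompact_Icc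
    intro t ht
    obtain ⟨M₁, V₁, hV₁, hM₁⟩ := grad_local_bound Θ hΘc hΘd (y t)
    obtain ⟨M₂, V₂, hV₂, hM₂⟩ := grad_local_bound Ψ hΨc hΨd (y t)
    have hyc : ContinuousAt y t := (hy t ht.1).continuousAt
    refine ⟨(M₁ + ε 0 * max M₂ 0) ^ 2, y ⁻¹' (V₁ ∩ V₂),
      hyc (Filter.inter_mem hV₁ hV₂), fun z hz => ?_⟩
    have hz0 : (0:ℝ) ≤ z := hz.2.1
    have h1 : ‖gradient Θ (y z)‖ ≤ M₁ := hM₁ _ hz.1.1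
    have h2 : ‖gradient Ψ (y z)‖ ≤ M₂ := hM₂ _ hz.1.2
    have hn : ‖y' z‖ ≤ M₁ + ε 0 * max M₂ 0 := by
      have h3 : y' z = -(gradient Θ (y z) + ε z • gradient Ψ (y z)) := by
        rw [hy'eq z hz0]; simp
      rw [h3, norm_neg]
      calc ‖gradient Θ (y z) + ε z • gradient Ψ (y z)‖
          ≤ ‖gradient Θ (y z)‖ + ‖ε z • gradient Ψ (y z)‖ := norm_add_le _ _
        _ ≤ M₁ + ε 0 * max M₂ 0 := by
            refine add_le_add h1 ?_
            rw [norm_smul, Real.norm_eq_abs, abs_of_nonneg (hεnn z)]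
            exact mul_le_mul (hεle z hz0) (h2.trans (le_max_left _ _))
              (norm_nonneg _) ((hεnn 0))
    exact pow_le_pow_left₀ (norm_nonneg _) hn 2
  -- integrability of ‖y'‖² on [0,T]
  have hgmeas : ∀ T : ℝ, AEStronglyMeasurable (fun t => ‖y' t‖ ^ 2)
      (volume.restrict (Set.Ioc (0:ℝ) T)) := by
    intro T
    have h0 : StronglyMeasurable (fun t : ℝ => ‖deriv y t‖ ^ 2) :=
      (continuous_norm.pow 2).comp_stronglyMeasurable (stronglyMeasurable_deriv y)
    refine h0.aestronglyMeasurable.congr ?_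
    refine (ae_restrict_iff' measurableSet_Ioc).2 (ae_of_all _ fun t ht => ?_)
    simp only []
    rw [← hy'deriv t ht.1.le]
  have hgint : ∀ T : ℝ, 0 < T →
      IntervalIntegrable (fun t => ‖y' t‖ ^ 2) volume 0 T := by
    intro T hT
    obtain ⟨C, hC⟩ := hbound T
    rw [intervalIntegrable_iff_integrableOn_Ioc_of_le hT.le]
    refine Integrable.mono' (integrable_const C) (hgmeas T) ?_
    refine (ae_restrict_iff' measurableSet_Ioc).2 (ae_of_all _ fun t ht => ?_)
    rw [Real.norm_eq_abs, abs_of_nonneg (by positivity)]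
    exact hC t ⟨ht.1.le, ht.2⟩
  -- integrability of the other pieces
  have hΨycont : ContinuousOn (fun t => Ψ (y t)) (Set.Ici (0:ℝ)) :=
    hΨd.continuous.comp_continuousOn ycont
  have hhint : ∀ T : ℝ, 0 < T →
      IntervalIntegrable (fun t => ε' t * Ψ (y t)) volume 0 T := by
    intro T hT
    apply ContinuousOn.intervalIntegrable
    rw [Set.uIcc_of_le hT.le]
    exact (hεC1.mono Set.Icc_subset_Ici_self).mul
      (hΨycont.mono Set.Icc_subset_Ici_self)
  have hε'int : ∀ T : ℝ, 0 < T → IntervalIntegrable ε' volume 0 T := by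
    intro T hT
    apply ContinuousOn.intervalIntegrable
    rw [Set.uIcc_of_le hT.le]
    exact hεC1.mono Set.Icc_subset_Ici_self
  -- FTC
  have hFTC : ∀ T : ℝ, 0 < T →
      (∫ t in (0:ℝ)..T, ‖y' t‖ ^ 2)
        = (Θ (y 0) + ε 0 * Ψ (y 0)) - (Θ (y T) + ε T * Ψ (y T))
          + ∫ t in (0:ℝ)..T, ε' t * Ψ (y t) := by
    intro T hT
    have h1 : (∫ t in (0:ℝ)..T, (-(‖y' t‖ ^ 2) + ε' t * Ψ (y t)))
        = (Θ (y T) + ε T * Ψ (y T)) - (Θ (y 0) + ε 0 * Ψ (y 0)) := by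
      refine intervalIntegral.integral_eq_sub_of_hasDerivAt
        (f := fun s => Θ (y s) + ε s * Ψ (y s))
        (f' := fun t => -(‖y' t‖ ^ 2) + ε' t * Ψ (y t)) (fun t ht => ?_) ?_
      · refine hEderiv t ?_
        rw [Set.uIcc_of_le hT.le] at ht
        exact ht.1
      · exact ((hgint T hT).neg).add (hhint T hT)
    have hneg : IntervalIntegrable (fun t => -(‖y' t‖ ^ 2)) volume 0 T := by
      exact (hgint T hT).neg
    have h2 : (∫ t in (0:ℝ)..T, (-(‖y' t‖ ^ 2) + ε' t * Ψ (y t)))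
        = -(∫ t in (0:ℝ)..T, ‖y' t‖ ^ 2) + ∫ t in (0:ℝ)..T, ε' t * Ψ (y t) := by
      rw [intervalIntegral.integral_add hneg (hhint T hT), intervalIntegral.integral_neg]
    rw [h2] at h1
    linarith [h1]
  -- part 1
  have part1 : ∀ T : ℝ, 0 < T →
      (∫ t in (0:ℝ)..T, ‖y' t‖ ^ 2) ≤
        Θ (y 0) + ε 0 * Ψ (y 0) + |m| * ε T + m * (∫ t in (0:ℝ)..T, ε' t) := by
    intro T hT
    have h1 := hFTC T hT
    have h2 : (∫ t in (0:ℝ)..T, ε' t * Ψ (y t)) ≤ ∫ t in (0:ℝ)..T, ε' t * m := by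
      refine intervalIntegral.integral_mono_on hT.le (hhint T hT)
        (((hε'int T hT)).mul_const m) (fun t ht => ?_)
      exact mul_le_mul_of_nonpos_left (hΨm (y t)) (hε'np t ht.1)
    have h3 : (∫ t in (0:ℝ)..T, ε' t * m) = (∫ t in (0:ℝ)..T, ε' t) * m :=
      intervalIntegral.integral_mul_const m ε'
    have h4 : -(Θ (y T) + ε T * Ψ (y T)) ≤ |m| * ε T := by
      have h5 : ε T * (-|m|) ≤ ε T * m :=
        mul_le_mul_of_nonneg_left (neg_abs_le m) (hεnn T)
      have h6 : ε T * m ≤ ε T * Ψ (y T) :=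
        mul_le_mul_of_nonneg_left (hΨm (y T)) (hεnn T)
      have := hΘnn (y T)
      nlinarith
    nlinarith [h2, h3, h4, h1]
  refine ⟨part1, ?_⟩
  -- part 2: uniform bound and finite energy
  have hεFTC : ∀ T : ℝ, 0 < T → (∫ t in (0:ℝ)..T, ε' t) = ε T - ε 0 := by
    intro T hT
    refine intervalIntegral.integral_eq_sub_of_hasDerivAt (fun t ht => ?_) (hε'int T hT)
    exact hεderiv t (by rw [Set.uIcc_of_le hT.le] at ht; exact ht.1)
  have huni : ∀ T : ℝ, 0 < T → (∫ t in (0:ℝ)..T, ‖y' t‖ ^ 2)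
      ≤ Θ (y 0) + ε 0 * Ψ (y 0) + 2 * |m| * ε 0 := by
    intro T hT
    have h1 := part1 T hT
    rw [hεFTC T hT] at h1
    have h2 : ε T ≤ ε 0 := hεle T hT.le
    have h3 : 0 ≤ ε T := hεnn T
    have h4 : |m| * ε T ≤ |m| * ε 0 := mul_le_mul_of_nonneg_left h2 (abs_nonneg m)
    have h5 : m * (ε T - ε 0) ≤ |m| * ε 0 := by
      nlinarith [mul_nonneg (by linarith [le_abs_self m, neg_abs_le m] : (0:ℝ) ≤ |m| + m)
          (by linarith : (0:ℝ) ≤ ε 0 - ε T),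
        mul_nonneg (abs_nonneg m) h3]
    linarith
  have hIntOn : IntegrableOn (fun t => ‖y' t‖ ^ 2) (Set.Ioi (0:ℝ)) volume := by
    refine integrableOn_Ioi_of_intervalIntegral_norm_bounded
      (Θ (y 0) + ε 0 * Ψ (y 0) + 2 * |m| * ε 0) 0
      (f := fun t => ‖y' t‖ ^ 2) (b := fun n : ℕ => (n : ℝ) + 1) (l := atTop)
      (fun n => ?_) (tendsto_atTop_add_const_right _ 1 tendsto_natCast_atTop_atTop) ?_
    · have h6 := hgint ((n : ℝ) + 1) (by positivity)
      rwa [intervalIntegrable_iff_integrableOn_Ioc_of_le (by positivity)] at h6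
    · refine Filter.Eventually.of_forall fun n => ?_
      have heqn : (∫ t in (0:ℝ)..((n : ℝ) + 1), ‖(‖y' t‖ ^ 2)‖)
          = ∫ t in (0:ℝ)..((n : ℝ) + 1), ‖y' t‖ ^ 2 := by
        refine intervalIntegral.integral_congr fun t ht => ?_
        rw [Real.norm_eq_abs, abs_of_nonneg (by positivity)]
      rw [heqn]
      exact huni _ (by positivity)
  simpa using hIntOn.lintegral_lt_top
end
end

section
/- Let Φ : H → ℝ be a convex differentiable function on a real Hilbert space H whose gradient ∇Φ is L-Lipschitz continuous for some L > 0, and let μ > 0 satisfy μL < 1. Then the proximal mapping prox_{μΦ} is strongly monotone with constant (1 − μL): for all y₁, y₂ ∈ H, ⟨prox_{μΦ}(y₂) − prox_{μΦ}(y₁), y₂ − y₁⟩ ≥ (1 − μL)‖y₂ − y₁‖². -/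
noncomputable section
open MeasureTheory Filter Set
open scoped InnerProductSpace RealInnerProductSpace Topology ENNReal

variable {H : Type*} [NormedAddCommGroup H] [InnerProductSpace ℝ H] [CompleteSpace H]

theorem grad_mono (Φ : H → ℝ) (hconv : ConvexOn ℝ Set.univ Φ) (hdiff : Differentiable ℝ Φ)
    (x y : H) : ⟪gradient Φ x, y - x⟫ ≤ ⟪gradient Φ y, y - x⟫ := by
  rcases eq_or_ne x y with rfl | hxy
  · simp
  set v := y - x with hv
  have hc : ∀ t : ℝ, HasDerivAt (fun s : ℝ => Φ (x + s • v)) ⟪gradient Φ (x + t • v), v⟫ t := by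
    intro t
    have hline : HasDerivAt (fun s : ℝ => x + s • v) v t := by
      simpa using ((hasDerivAt_id t).smul_const v).const_add x
    have hg : HasGradientAt Φ (gradient Φ (x + t • v)) (x + t • v) :=
      (hdiff _).hasGradientAt
    have h := (hasGradientAt_iff_hasFDerivAt.1 hg).comp_hasDerivAt t hline
    exact h
  set g : ℝ → ℝ := fun s => Φ (x + s • v) with hgdef
  have hgc : ConvexOn ℝ Set.univ g := by
    have := hconv.comp_affineMap (AffineMap.lineMap x y)
    have heq : ∀ s : ℝ, (Φ ∘ (AffineMap.lineMap x y)) s = g s := by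
      intro s; simp only [Function.comp_apply, AffineMap.lineMap_apply_module, g, hv]
      congr 1; module
    refine ConvexOn.congr ?_ (fun s _ => (heq s))
    simpa using this
  have h1 : x + (1:ℝ) • v = y := by simp [hv]
  have hd0 : HasDerivAt g ⟪gradient Φ x, v⟫ 0 := by
    have := hc 0; simpa using this
  have hd1 : HasDerivAt g ⟪gradient Φ y, v⟫ 1 := by
    have := hc 1; rw [h1] at this; exact this
  have hs1 : ⟪gradient Φ x, v⟫ ≤ slope g 0 1 :=
    hgc.le_slope_of_hasDerivAt (Set.mem_univ _) (Set.mem_univ _) one_pos hd0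
  have hs2 : slope g 0 1 ≤ ⟪gradient Φ y, v⟫ :=
    hgc.slope_le_of_hasDerivAt (Set.mem_univ _) (Set.mem_univ _) one_pos hd1
  exact hs1.trans hs2

/-- If `Φ` is convex differentiable with `L`-Lipschitz gradient and
`μL < 1`, the proximal mapping `prox_{μΦ}` (characterized by
`prox_{μΦ}(y) + μ∇Φ(prox_{μΦ}(y)) = y`) is strongly monotone with constant `1 - μL`. -/
theorem stmt13 (Φ : H → ℝ) (hconv : ConvexOn ℝ Set.univ Φ) (hdiff : Differentiable ℝ Φ)
    (L : ℝ) (hL : 0 < L) (hlip : LipschitzWith (Real.toNNReal L) (gradient Φ))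
    (μ : ℝ) (hμ : 0 < μ) (hμL : μ * L < 1)
    (p : H → H) (hp : ∀ y : H, p y + μ • gradient Φ (p y) = y) :
    ∀ y₁ y₂ : H, (1 - μ * L) * ‖y₂ - y₁‖ ^ 2 ≤ ⟪p y₂ - p y₁, y₂ - y₁⟫ := by
  intro y₁ y₂
  set u := p y₂ - p y₁ with hu
  set g := gradient Φ (p y₂) - gradient Φ (p y₁) with hg
  have hd : y₂ - y₁ = u + μ • g := by
    have h1 := hp y₁; have h2 := hp y₂
    rw [← h1, ← h2]; simp [hu, hg, smul_sub]; abel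
  have hmono : 0 ≤ ⟪g, u⟫ := by
    have := grad_mono Φ hconv hdiff (p y₁) (p y₂)
    have h' : 0 ≤ ⟪gradient Φ (p y₂) - gradient Φ (p y₁), p y₂ - p y₁⟫ := by
      rw [inner_sub_left]; linarith
    simpa [hg, hu] using h'
  have hlipb : ‖g‖ ≤ L * ‖u‖ := by
    have := hlip.dist_le_mul (p y₂) (p y₁)
    rw [dist_eq_norm, dist_eq_norm] at this
    simpa [hg, hu, Real.coe_toNNReal L hL.le] using this
  have hcs : ⟪g, u⟫ ≤ ‖g‖ * ‖u‖ := real_inner_le_norm g u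
  have hnu : 0 ≤ ‖u‖ := norm_nonneg u
  have hng : 0 ≤ ‖g‖ := norm_nonneg g
  have hexp : ‖y₂ - y₁‖ ^ 2 = ‖u‖ ^ 2 + 2 * μ * ⟪g, u⟫ + μ ^ 2 * ‖g‖ ^ 2 := by
    rw [hd, norm_add_sq_real, inner_smul_right, norm_smul, real_inner_comm]
    simp [mul_pow, abs_of_pos hμ]
    ring
  have hip : ⟪p y₂ - p y₁, y₂ - y₁⟫ = ‖u‖ ^ 2 + μ * ⟪g, u⟫ := by
    rw [← hu, hd, inner_add_right, inner_smul_right, real_inner_self_eq_norm_sq,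
      real_inner_comm]
  rw [hip, hexp]
  rcases le_or_gt 1 (2 * μ * L) with hcase | hcase
  · have hq : ‖g‖ ^ 2 ≤ L ^ 2 * ‖u‖ ^ 2 := by
      nlinarith [mul_le_mul hlipb hlipb hng (by positivity : (0:ℝ) ≤ L * ‖u‖)]
    have h1 : 0 ≤ μ * ((2 * μ * L - 1) * ⟪g, u⟫) :=
      mul_nonneg hμ.le (mul_nonneg (by linarith) hmono)
    have h2 : 0 ≤ (1 - μ * L) * (μ ^ 2 * (L ^ 2 * ‖u‖ ^ 2 - ‖g‖ ^ 2)) :=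
      mul_nonneg (by linarith) (mul_nonneg (sq_nonneg μ) (by linarith))
    have h3 : 0 ≤ μ * L * (1 - (1 - μ * L) * (μ * L)) * ‖u‖ ^ 2 := by
      have : 0 ≤ 1 - (1 - μ * L) * (μ * L) := by nlinarith [sq_nonneg (μ * L)]
      positivity
    nlinarith [h1, h2, h3]
  · have hB : 0 ≤ μ * L * (1 - 2 * μ * L) * (‖g‖ * ‖u‖ - ⟪g, u⟫) :=
      mul_nonneg (mul_nonneg (mul_pos hμ hL).le (by linarith)) (sub_nonneg.2 hcs)
    have hf1 : 0 ≤ L * ‖u‖ - ‖g‖ + μ * L * ‖g‖ := by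
      have := sub_nonneg.2 hlipb
      have : 0 ≤ μ * L * ‖g‖ := by positivity
      linarith [sub_nonneg.2 hlipb]
    have hC : 0 ≤ μ * ((L * ‖u‖ - ‖g‖ + μ * L * ‖g‖) * (L * ‖u‖ + μ * L * ‖g‖)) :=
      mul_nonneg hμ.le (mul_nonneg hf1 (by positivity))
    nlinarith [hB, hC, mul_pos hμ hL, hL]
end
end
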